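/- Suppose S is purely imaginary, Ω₋ and Ω₊ are purely imaginary, and C₋ and C₊ are purely imaginary. Then for every s ∈ ℂ with sI_{2n} − A invertible, the transfer matrix is block off-diagonal: G_qq[s] = 0 and G_pp[s] = 0, i.e., quantum BAE measurements of q_out with respect to q_in and of p_out with respect to p_in are realized. -/

import Mathlib

open Matrix

noncomputable section

namespace LQS

/-- Entrywise real part, as a complex matrix. -/
def matRe {k l : ℕ} (X : Matrix (Fin k) (Fin l) ℂ) : Matrix (Fin k) (Fin l) ℂ :=
  fun i j => ((X i j).re : ℂ)

/-- Entrywise imaginary part, as a complex matrix. -/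
def matIm {k l : ℕ} (X : Matrix (Fin k) (Fin l) ℂ) : Matrix (Fin k) (Fin l) ℂ :=
  fun i j => ((X i j).im : ℂ)

/-- A complex matrix has real entries. -/
def isReal {k l : ℕ} (X : Matrix (Fin k) (Fin l) ℂ) : Prop := ∀ i j, (X i j).im = 0

/-- A complex matrix is purely imaginary (every entry has zero real part). -/
def isPurelyImag {k l : ℕ} (X : Matrix (Fin k) (Fin l) ℂ) : Prop := ∀ i j, (X i j).re = 0

/-- The symplectic matrix J_k = [[0, I],[−I, 0]]. -/
def Jmat (k : ℕ) : Matrix (Fin k ⊕ Fin k) (Fin k ⊕ Fin k) ℂ :=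
  fromBlocks 0 1 (-1) 0

/-- D = [[Re S, −Im S],[Im S, Re S]]. -/
def quadD {m : ℕ} (S : Matrix (Fin m) (Fin m) ℂ) :
    Matrix (Fin m ⊕ Fin m) (Fin m ⊕ Fin m) ℂ :=
  fromBlocks (matRe S) (-(matIm S)) (matIm S) (matRe S)

/-- C = [[Re(C₋+C₊), −Im(C₋−C₊)],[Im(C₋+C₊), Re(C₋−C₊)]]. -/
def quadC {m n : ℕ} (Cm Cp : Matrix (Fin m) (Fin n) ℂ) :
    Matrix (Fin m ⊕ Fin m) (Fin n ⊕ Fin n) ℂ :=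
  fromBlocks (matRe (Cm + Cp)) (-(matIm (Cm - Cp))) (matIm (Cm + Cp)) (matRe (Cm - Cp))

/-- B = −[[Re((C₋−C₊)†), −Im((C₋−C₊)†)],[Im((C₋+C₊)†), Re((C₋+C₊)†)]]·D. -/
def quadB {m n : ℕ} (S : Matrix (Fin m) (Fin m) ℂ) (Cm Cp : Matrix (Fin m) (Fin n) ℂ) :
    Matrix (Fin n ⊕ Fin n) (Fin m ⊕ Fin m) ℂ :=
  -(fromBlocks (matRe (Cm - Cp)ᴴ) (-(matIm (Cm - Cp)ᴴ))
      (matIm (Cm + Cp)ᴴ) (matRe (Cm + Cp)ᴴ)) * quadD S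

/-- JH = [[Im(Ω₋+Ω₊), Re(Ω₋−Ω₊)],[−Re(Ω₋+Ω₊), Im(Ω₋−Ω₊)]]. -/
def quadJH {n : ℕ} (Om Op : Matrix (Fin n) (Fin n) ℂ) :
    Matrix (Fin n ⊕ Fin n) (Fin n ⊕ Fin n) ℂ :=
  fromBlocks (matIm (Om + Op)) (matRe (Om - Op)) (-(matRe (Om + Op))) (matIm (Om - Op))

/-- C♯ = −J_n·Cᵀ·J_m. -/
def quadCsharp {m n : ℕ} (Cm Cp : Matrix (Fin m) (Fin n) ℂ) :
    Matrix (Fin n ⊕ Fin n) (Fin m ⊕ Fin m) ℂ :=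
  -(Jmat n) * (quadC Cm Cp)ᵀ * (Jmat m)

/-- A = JH − (1/2)·C♯·C. -/
def quadA {m n : ℕ} (Cm Cp : Matrix (Fin m) (Fin n) ℂ) (Om Op : Matrix (Fin n) (Fin n) ℂ) :
    Matrix (Fin n ⊕ Fin n) (Fin n ⊕ Fin n) ℂ :=
  quadJH Om Op - (1/2 : ℂ) • (quadCsharp Cm Cp * quadC Cm Cp)

/-- Transfer matrix G[s] = D + C(sI − A)⁻¹B. -/
def transferG {m n : ℕ} (S : Matrix (Fin m) (Fin m) ℂ) (Cm Cp : Matrix (Fin m) (Fin n) ℂ)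
    (Om Op : Matrix (Fin n) (Fin n) ℂ) (s : ℂ) :
    Matrix (Fin m ⊕ Fin m) (Fin m ⊕ Fin m) ℂ :=
  quadD S + quadC Cm Cp *
    (s • (1 : Matrix (Fin n ⊕ Fin n) (Fin n ⊕ Fin n) ℂ) - quadA Cm Cp Om Op)⁻¹ *
    quadB S Cm Cp

end LQS

open LQS Matrix

namespace LQSAux
open LQS

def Sig (k : ℕ) : Matrix (Fin k ⊕ Fin k) (Fin k ⊕ Fin k) ℂ := fromBlocks 1 0 0 (-1)

lemma Sig_mul_Sig (k : ℕ) : Sig k * Sig k = 1 := by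
  simp [Sig, fromBlocks_multiply, ← fromBlocks_one]

lemma Sig_inv (k : ℕ) : (Sig k)⁻¹ = Sig k :=
  inv_eq_right_inv (Sig_mul_Sig k)

lemma Sig_transpose (k : ℕ) : (Sig k)ᵀ = Sig k := by
  simp [Sig, fromBlocks_transpose]

lemma conj_fromBlocks {k l : ℕ} (a : Matrix (Fin k) (Fin l) ℂ) (b c d : Matrix (Fin k) (Fin l) ℂ) :
    Sig k * fromBlocks a b c d * Sig l = fromBlocks a (-b) (-c) d := by
  simp [Sig, fromBlocks_multiply]

lemma conj_mul {k l p : ℕ} (X : Matrix (Fin k ⊕ Fin k) (Fin l ⊕ Fin l) ℂ)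
    (Y : Matrix (Fin l ⊕ Fin l) (Fin p ⊕ Fin p) ℂ) :
    Sig k * (X * Y) * Sig p = (Sig k * X * Sig l) * (Sig l * Y * Sig p) := by
  rw [show (Sig k * X * Sig l) * (Sig l * Y * Sig p)
      = Sig k * (X * (Sig l * Sig l) * Y) * Sig p from by simp only [Matrix.mul_assoc],
    Sig_mul_Sig, Matrix.mul_one]

lemma conj_antidiag {k l : ℕ} (b c : Matrix (Fin k) (Fin l) ℂ) :
    Sig k * fromBlocks 0 b c 0 * Sig l = -(fromBlocks 0 b c 0) := by
  rw [conj_fromBlocks, fromBlocks_neg, neg_zero]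

lemma conj_diag {k l : ℕ} (a d : Matrix (Fin k) (Fin l) ℂ) :
    Sig k * fromBlocks a 0 0 d * Sig l = fromBlocks a 0 0 d := by
  rw [conj_fromBlocks, neg_zero]

lemma matRe_zero {k l : ℕ} {X : Matrix (Fin k) (Fin l) ℂ} (h : isPurelyImag X) :
    matRe X = 0 := by
  funext i j; simp [matRe, h i j]

lemma pim_add {k l : ℕ} {X Y : Matrix (Fin k) (Fin l) ℂ} (hX : isPurelyImag X)
    (hY : isPurelyImag Y) : isPurelyImag (X + Y) := by
  intro i j; simp [Matrix.add_apply, hX i j, hY i j]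

lemma pim_sub {k l : ℕ} {X Y : Matrix (Fin k) (Fin l) ℂ} (hX : isPurelyImag X)
    (hY : isPurelyImag Y) : isPurelyImag (X - Y) := by
  intro i j; simp [Matrix.sub_apply, hX i j, hY i j]

lemma pim_ct {k l : ℕ} {X : Matrix (Fin k) (Fin l) ℂ} (hX : isPurelyImag X) :
    isPurelyImag Xᴴ := by
  intro i j; simp [Matrix.conjTranspose_apply, hX j i]

end LQSAux

open LQSAux

/-- With purely imaginary S, Ω₋, Ω₊, C₋, C₊:
G_qq[s] = 0 and G_pp[s] = 0 (block off-diagonal transfer matrix). -/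
theorem stmt_4 {m n : ℕ} (hm : 1 ≤ m) (hn : 1 ≤ n)
    (S : Matrix (Fin m) (Fin m) ℂ) (Cm Cp : Matrix (Fin m) (Fin n) ℂ)
    (Om Op : Matrix (Fin n) (Fin n) ℂ)
    (hS : S ∈ Matrix.unitaryGroup (Fin m) ℂ)
    (hOmH : Omᴴ = Om) (hOpS : Opᵀ = Op)
    (hSim : isPurelyImag S) (hCmim : isPurelyImag Cm) (hCpim : isPurelyImag Cp)
    (hOmim : isPurelyImag Om) (hOpim : isPurelyImag Op) :
    ∀ s : ℂ,
      IsUnit (s • (1 : Matrix (Fin n ⊕ Fin n) (Fin n ⊕ Fin n) ℂ) - quadA Cm Cp Om Op) →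
      (transferG S Cm Cp Om Op s).toBlocks₁₁ = 0 ∧
      (transferG S Cm Cp Om Op s).toBlocks₂₂ = 0 := by
  intro s hU
  have hD : Sig m * quadD S * Sig m = -(quadD S) := by
    rw [quadD, matRe_zero hSim, conj_antidiag]
  have hC : Sig m * quadC Cm Cp * Sig n = -(quadC Cm Cp) := by
    rw [quadC, matRe_zero (pim_add hCmim hCpim), matRe_zero (pim_sub hCmim hCpim),
      conj_antidiag]
  have hCT : Sig n * (quadC Cm Cp)ᵀ * Sig m = -((quadC Cm Cp)ᵀ) := by
    have h := congrArg Matrix.transpose hC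
    simp only [Matrix.transpose_mul, Sig_transpose, Matrix.transpose_neg] at h
    simp only [← Matrix.mul_assoc] at h
    exact h
  have hJm : Sig m * Jmat m * Sig m = -(Jmat m) := by rw [Jmat, conj_antidiag]
  have hJn : Sig n * Jmat n * Sig n = -(Jmat n) := by rw [Jmat, conj_antidiag]
  have hJH : Sig n * quadJH Om Op * Sig n = quadJH Om Op := by
    rw [quadJH, matRe_zero (pim_add hOmim hOpim), matRe_zero (pim_sub hOmim hOpim),
      neg_zero, conj_diag]
  have hCs : Sig n * quadCsharp Cm Cp * Sig m = -(quadCsharp Cm Cp) := by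
    have h1 : Sig n * quadCsharp Cm Cp * Sig m
        = (Sig n * (-(Jmat n)) * Sig n) * (Sig n * (quadC Cm Cp)ᵀ * Sig m)
          * (Sig m * Jmat m * Sig m) := by
      rw [quadCsharp, LQSAux.conj_mul, LQSAux.conj_mul]
    have h2 : Sig n * (-(Jmat n)) * Sig n = Jmat n := by
      rw [Matrix.mul_neg, Matrix.neg_mul, hJn, neg_neg]
    rw [h1, h2, hCT, hJm, quadCsharp]
    simp only [Matrix.mul_neg, Matrix.neg_mul, neg_neg]
  have hCsC : Sig n * (quadCsharp Cm Cp * quadC Cm Cp) * Sig n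
      = quadCsharp Cm Cp * quadC Cm Cp := by
    rw [LQSAux.conj_mul, hCs, hC, Matrix.neg_mul, Matrix.mul_neg, neg_neg]
  have hA : Sig n * quadA Cm Cp Om Op * Sig n = quadA Cm Cp Om Op := by
    rw [quadA, Matrix.mul_sub, Matrix.sub_mul, hJH, Matrix.mul_smul, Matrix.smul_mul, hCsC]
  have hM : Sig n * (s • (1 : Matrix (Fin n ⊕ Fin n) (Fin n ⊕ Fin n) ℂ)
        - quadA Cm Cp Om Op) * Sig n
      = s • (1 : Matrix (Fin n ⊕ Fin n) (Fin n ⊕ Fin n) ℂ) - quadA Cm Cp Om Op := by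
    rw [Matrix.mul_sub, Matrix.sub_mul, hA, Matrix.mul_smul, Matrix.smul_mul,
      Matrix.mul_one, Sig_mul_Sig]
  have hMinv : Sig n * (s • (1 : Matrix (Fin n ⊕ Fin n) (Fin n ⊕ Fin n) ℂ)
        - quadA Cm Cp Om Op)⁻¹ * Sig n
      = (s • (1 : Matrix (Fin n ⊕ Fin n) (Fin n ⊕ Fin n) ℂ) - quadA Cm Cp Om Op)⁻¹ := by
    conv_rhs => rw [← hM]
    rw [Matrix.mul_inv_rev, Matrix.mul_inv_rev, Sig_inv]
    simp only [Matrix.mul_assoc]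
  have hB : Sig n * quadB S Cm Cp * Sig m = quadB S Cm Cp := by
    rw [quadB, matRe_zero (pim_ct (pim_sub hCmim hCpim)),
      matRe_zero (pim_ct (pim_add hCmim hCpim)), LQSAux.conj_mul, hD]
    simp only [Matrix.mul_neg, Matrix.neg_mul, neg_neg, conj_antidiag]
  have hG : Sig m * transferG S Cm Cp Om Op s * Sig m
      = -(transferG S Cm Cp Om Op s) := by
    rw [transferG, Matrix.mul_add, Matrix.add_mul, hD,
      LQSAux.conj_mul (quadC Cm Cp * _) (quadB S Cm Cp), LQSAux.conj_mul (quadC Cm Cp),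
      hC, hMinv, hB]
    rw [Matrix.neg_mul, Matrix.neg_mul, neg_add]
  set G := transferG S Cm Cp Om Op s with hGdef
  have h3 : fromBlocks G.toBlocks₁₁ (-(G.toBlocks₁₂)) (-(G.toBlocks₂₁)) G.toBlocks₂₂
      = -G := by
    rw [← conj_fromBlocks, fromBlocks_toBlocks]
    exact hG
  constructor
  · ext i j
    have h := congrFun (congrFun h3 (Sum.inl i)) (Sum.inl j)
    simp only [fromBlocks_apply₁₁, Matrix.neg_apply, Matrix.toBlocks₁₁, of_apply] at h ⊢
    simp only [Matrix.zero_apply]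
    linear_combination ((1 : ℂ)/2) * h
  · ext i j
    have h := congrFun (congrFun h3 (Sum.inr i)) (Sum.inr j)
    simp only [fromBlocks_apply₂₂, Matrix.neg_apply, Matrix.toBlocks₂₂, of_apply] at h ⊢
    simp only [Matrix.zero_apply]
    linear_combination ((1 : ℂ)/2) * h
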